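/- arXiv:2004.02819 — 4 statements merged into one kernel-verified Lean document; each statement's English description precedes it below -/
import Mathlib

section
/- A nonempty subset A of a group G is 2-stable (there do not exist a1,a2,b1,b2 in G with a_i*b_j ∈ A iff i ≤ j) if and only if A is a left coset of a subgroup of G. -/
/-- A ⊆ G is k-stable if there are no a₁,…,a_k, b₁,…,b_k with a_i * b_j ∈ A iff i ≤ j. -/
def IsKStable {G : Type*} [Group G] (k : ℕ) (A : Set G) : Prop :=
  ¬ ∃ (a b : Fin k → G), ∀ i j, a i * b j ∈ A ↔ i ≤ j

/-- A nonempty subset of a group is 2-stable iff it is a left coset of a subgroup. -/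
theorem stmt0 {G : Type*} [Group G] (A : Set G) (hA : A.Nonempty) :
    IsKStable 2 A ↔ ∃ (H : Subgroup G) (g : G), A = (fun h => g * h) '' (H : Set G) := by
  constructor
  · intro hst
    obtain ⟨g, hg⟩ := hA
    have key : ∀ x ∈ A, ∀ y ∈ A, ∀ z ∈ A, x * y⁻¹ * z ∈ A := by
      intro x hx y hy z hz
      by_contra hw
      exact hst ⟨![1, x * y⁻¹], ![z, y], by
        intro i j
        fin_cases i <;> fin_cases j <;>
          simp_all [Fin.le_def, mul_assoc]⟩
    have onem : (1 : G) ∈ {h | g * h ∈ A} := by simpa using hg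
    have mulm : ∀ {h1 h2 : G}, h1 ∈ {h | g * h ∈ A} → h2 ∈ {h | g * h ∈ A} →
        h1 * h2 ∈ {h | g * h ∈ A} := by
      intro h1 h2 h1m h2m
      have := key _ h1m _ hg _ h2m
      have e : g * h1 * g⁻¹ * (g * h2) = g * (h1 * h2) := by group
      rw [e] at this
      exact this
    have invm : ∀ {h : G}, h ∈ {h | g * h ∈ A} → h⁻¹ ∈ {h | g * h ∈ A} := by
      intro h hm
      have := key _ hg _ hm _ hg
      have e : g * (g * h)⁻¹ * g = g * h⁻¹ := by group
      rw [e] at this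
      exact this
    refine ⟨⟨⟨⟨{h | g * h ∈ A}, fun ha hb => mulm ha hb⟩, onem⟩, fun ha => invm ha⟩, g, ?_⟩
    · ext x
      constructor
      · intro hx
        exact ⟨g⁻¹ * x, by simpa using hx, by group⟩
      · rintro ⟨h, hm, rfl⟩
        exact hm
  · rintro ⟨H, g, rfl⟩ ⟨a, b, hab⟩
    have h00 : a 0 * b 0 ∈ (fun h => g * h) '' (H : Set G) := (hab 0 0).2 (by decide)
    have h01 : a 0 * b 1 ∈ (fun h => g * h) '' (H : Set G) := (hab 0 1).2 (by decide)
    have h11 : a 1 * b 1 ∈ (fun h => g * h) '' (H : Set G) := (hab 1 1).2 (by decide)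
    have h10 : a 1 * b 0 ∉ (fun h => g * h) '' (H : Set G) := fun h =>
      absurd ((hab 1 0).1 h) (by decide)
    obtain ⟨h0, hm0, he0⟩ := h00
    obtain ⟨h1, hm1, he1⟩ := h01
    obtain ⟨h2, hm2, he2⟩ := h11
    apply h10
    refine ⟨h2 * h1⁻¹ * h0, mul_mem (mul_mem hm2 (inv_mem hm1)) hm0, ?_⟩
    simp only at he0 he1 he2 ⊢
    have eb0 : b 0 = (a 0)⁻¹ * (g * h0) := by rw [he0]; group
    have eb1 : b 1 = (a 0)⁻¹ * (g * h1) := by rw [he1]; group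
    have ea1 : a 1 = g * h2 * (b 1)⁻¹ := by rw [he2]; group
    rw [ea1, eb1, eb0]
    group
end

section
/- Let G be a group, A ⊆ G, and define the relation φ_A(x;(y,z)) on G × G² by x ∈ Ay △ Az. If the relation ψ(x,y) given by x ∈ Ay is k-stable (k ≥ 2), then φ_A is n-stable where n = R(R(k,k+1), R(k,k+1)) + 1, with R the two-color graph Ramsey number. -/
def RamseyProp (N k l : ℕ) : Prop :=
  ∀ c : Fin N → Fin N → Bool, (∀ i j, c i j = c j i) →
    (∃ s : Finset (Fin N), s.card = k ∧ ∀ i ∈ s, ∀ j ∈ s, i ≠ j → c i j = true) ∨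
    (∃ s : Finset (Fin N), s.card = l ∧ ∀ i ∈ s, ∀ j ∈ s, i ≠ j → c i j = false)

/-- The two-color Ramsey number. -/
noncomputable def ramsey (k l : ℕ) : ℕ := sInf {N | RamseyProp N k l}


/-!
Let `(a_i, (y_j, z_j))` be a ladder for `x ∈ Ay △ Az`. Ramsey's theorem for the colouring
`{i < j} ↦ [a_j ∈ A y_i]` gives `R(k, k+1)` indices on which every entry below the diagonal has the
same truth value `P`, for `y` and for `z` alike since the symmetric difference is not hit there.
On and above the diagonal exactly one of `y_j, z_j` is hit by `a_i`; let `u_j` be the one hit by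
`a_j` and `v_j` the other. Ramsey's theorem for `{i < j} ↦ [a_i ∈ A u_j ↔ ¬P]` then gives either
`k` indices on which `(a_i, u_j)` is a ladder for `x ∈ Ay` (reversed if `P` holds), or `k + 1`
indices on which `(a_i, v_j)` is a strict ladder, which becomes a ladder of length `k` after
shifting one index.
-/

open Finset

section Ramsey

variable {ι : Type*} {c : ι → ι → Bool}

def HasMonochromaticSubset (c : ι → ι → Bool) (b : Bool) (n : ℕ) (s : Finset ι) : Prop :=
  ∃ t ⊆ s, #t = n ∧ (t : Set ι).Pairwise fun i j => c i j = b

namespace HasMonochromaticSubset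

variable {b : Bool} {n : ℕ} {s s' : Finset ι}

theorem zero : HasMonochromaticSubset c b 0 s :=
  ⟨∅, empty_subset s, card_empty, by simp⟩

theorem mono (h : HasMonochromaticSubset c b n s) (hs : s ⊆ s') :
    HasMonochromaticSubset c b n s' :=
  let ⟨t, hts, ht, htc⟩ := h
  ⟨t, hts.trans hs, ht, htc⟩

theorem succ_of_filter [DecidableEq ι] (hc : ∀ i j, c i j = c j i) {v : ι} (hv : v ∈ s)
    (h : HasMonochromaticSubset c b n ((s.erase v).filter (c v · = b))) :
    HasMonochromaticSubset c b (n + 1) s := by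
  obtain ⟨t, hts, rfl, htc⟩ := h
  have hvt : v ∉ t := fun hv' => by simpa using hts hv'
  refine ⟨insert v t, insert_subset hv (hts.trans ((filter_subset _ _).trans (erase_subset _ _))),
    card_insert_of_notMem hvt, ?_⟩
  rw [coe_insert, Set.pairwise_insert]
  exact ⟨htc, fun j hj _ => have hvj := (mem_filter.1 (hts hj)).2; ⟨hvj, (hc j v).trans hvj⟩⟩

end HasMonochromaticSubset

theorem hasMonochromaticSubset_or_of_choose_le [DecidableEq ι] (hc : ∀ i j, c i j = c j i) :
    ∀ (k l : ℕ) (s : Finset ι), (k + l).choose k ≤ #s →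
      HasMonochromaticSubset c true k s ∨ HasMonochromaticSubset c false l s
  | 0, _, _, _ => .inl .zero
  | _ + 1, 0, _, _ => .inr .zero
  | k + 1, l + 1, s, hs => by
    obtain ⟨v, hv⟩ : s.Nonempty := card_pos.1 ((Nat.choose_pos (by omega)).trans_le hs)
    set s₁ := (s.erase v).filter (c v · = true)
    set s₂ := (s.erase v).filter (c v · = false)
    have hsplit : #s₁ + #s₂ + 1 = #s := by
      simp only [s₁, s₂, ← Bool.not_eq_true, card_filter_add_card_filter_not,
        card_erase_add_one hv]
    have hpascal : (k + 1 + (l + 1)).choose (k + 1) =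
        (k + (l + 1)).choose k + (k + 1 + l).choose (k + 1) := by
      rw [show k + 1 + (l + 1) = k + (l + 1) + 1 by omega, Nat.choose_succ_succ',
        show k + (l + 1) = k + 1 + l by omega]
    have hs₁ : s₁ ⊆ s := (filter_subset _ _).trans (erase_subset _ _)
    have hs₂ : s₂ ⊆ s := (filter_subset _ _).trans (erase_subset _ _)
    by_cases h₁ : (k + (l + 1)).choose k ≤ #s₁
    · rcases hasMonochromaticSubset_or_of_choose_le hc k (l + 1) s₁ h₁ with h | h
      exacts [.inl (h.succ_of_filter hc hv), .inr (h.mono hs₁)]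
    · rcases hasMonochromaticSubset_or_of_choose_le hc (k + 1) l s₂ (by omega) with h | h
      exacts [.inl (h.mono hs₂), .inr (h.succ_of_filter hc hv)]
termination_by k l => k + l

end Ramsey

theorem ramseyProp_choose (k l : ℕ) : RamseyProp ((k + l).choose k) k l := by
  intro c hc
  rcases hasMonochromaticSubset_or_of_choose_le hc k l univ (by simp) with
    ⟨t, -, ht, htc⟩ | ⟨t, -, ht, htc⟩
  exacts [.inl ⟨t, ht, fun i hi j hj => htc hi hj⟩, .inr ⟨t, ht, fun i hi j hj => htc hi hj⟩]

theorem ramseyProp_ramsey (k l : ℕ) : RamseyProp (ramsey k l) k l :=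
  Nat.sInf_mem (s := {N | RamseyProp N k l}) ⟨_, ramseyProp_choose k l⟩

namespace RamseyProp

variable {N k l : ℕ}

theorem exists_orderEmbedding (h : RamseyProp N k l) (r : Fin N → Fin N → Prop) :
    (∃ g : Fin k ↪o Fin N, ∀ i j, i < j → r (g i) (g j)) ∨
      ∃ g : Fin l ↪o Fin N, ∀ i j, i < j → ¬r (g i) (g j) := by
  classical
  let c : Fin N → Fin N → Bool := fun p q => decide (r (min p q) (max p q))
  have hmono (s : Finset (Fin N)) {n : ℕ} (hs : #s = n) {b : Bool}
      (hsc : ∀ p ∈ s, ∀ q ∈ s, p ≠ q → c p q = b) (i j : Fin n) (hij : i < j) :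
      decide (r (s.orderEmbOfFin hs i) (s.orderEmbOfFin hs j)) = b := by
    have hlt := (s.orderEmbOfFin hs).strictMono hij
    simpa [c, min_eq_left hlt.le, max_eq_right hlt.le] using
      hsc _ (orderEmbOfFin_mem s hs i) _ (orderEmbOfFin_mem s hs j) hlt.ne
  rcases h c (fun p q => by simp only [c, min_comm p q, max_comm p q]) with
    ⟨s, hs, hsc⟩ | ⟨s, hs, hsc⟩
  · exact .inl ⟨_, fun i j hij => of_decide_eq_true (hmono s hs hsc i j hij)⟩
  · exact .inr ⟨_, fun i j hij => of_decide_eq_false (hmono s hs hsc i j hij)⟩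

theorem exists_orderEmbedding_iff (h : RamseyProp N k k) (r : Fin N → Fin N → Prop) :
    ∃ (P : Prop) (g : Fin k ↪o Fin N), ∀ i j, i < j → (r (g i) (g j) ↔ P) := by
  rcases h.exists_orderEmbedding r with ⟨g, hg⟩ | ⟨g, hg⟩
  exacts [⟨True, g, fun i j hij => iff_true_intro (hg i j hij)⟩,
    ⟨False, g, fun i j hij => iff_false_intro (hg i j hij)⟩]

end RamseyProp

section Ladder

variable {α β : Type*}

/-- `R` is `n`-stable in the sense of the paper iff `¬HasLadder R n`. -/
def HasLadder (R : α → β → Prop) (n : ℕ) : Prop :=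
  ∃ (a : Fin n → α) (b : Fin n → β), ∀ i j, R (a i) (b j) ↔ i ≤ j

variable {R : α → β → Prop} {n : ℕ}

theorem HasLadder.mono {m : ℕ} (h : HasLadder R n) (hmn : m ≤ n) : HasLadder R m :=
  let ⟨a, b, hab⟩ := h
  ⟨a ∘ Fin.castLE hmn, b ∘ Fin.castLE hmn, fun _ _ => hab _ _⟩

theorem hasLadder_of_iff_ge (a : Fin n → α) (b : Fin n → β)
    (h : ∀ i j, R (a i) (b j) ↔ j ≤ i) : HasLadder R n :=
  ⟨a ∘ Fin.rev, b ∘ Fin.rev, fun _ _ => (h _ _).trans Fin.rev_le_rev⟩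

theorem hasLadder_of_iff_lt (a : Fin (n + 1) → α) (b : Fin (n + 1) → β)
    (h : ∀ i j, R (a i) (b j) ↔ i < j) : HasLadder R n :=
  ⟨a ∘ Fin.castSucc, b ∘ Fin.succ, fun _ _ => (h _ _).trans Fin.castSucc_lt_succ_iff⟩

theorem hasLadder_of_iff_gt (a : Fin (n + 1) → α) (b : Fin (n + 1) → β)
    (h : ∀ i j, R (a i) (b j) ↔ j < i) : HasLadder R n :=
  hasLadder_of_iff_ge (a ∘ Fin.succ) (b ∘ Fin.castSucc) fun _ _ =>
    (h _ _).trans Fin.castSucc_lt_succ_iff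

theorem hasLadder_of_offDiag_of_diag (a : Fin n → α) (b : Fin n → β) (P : Prop)
    (habove : ∀ i j, i < j → (R (a i) (b j) ↔ ¬P)) (hdiag : ∀ i, R (a i) (b i))
    (hbelow : ∀ i j, j < i → (R (a i) (b j) ↔ P)) : HasLadder R n := by
  by_cases hP : P
  · refine hasLadder_of_iff_ge a b fun i j => ?_
    rcases lt_trichotomy i j with h | rfl | h
    · simp [habove i j h, hP, h.not_ge]
    · simp [hdiag]
    · simp [hbelow i j h, hP, h.le]
  · refine ⟨a, b, fun i j => ?_⟩
    rcases lt_trichotomy i j with h | rfl | h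
    · simp [habove i j h, hP, h.le]
    · simp [hdiag]
    · simp [hbelow i j h, hP, h.not_ge]

theorem hasLadder_of_offDiag_of_not_diag (a : Fin (n + 1) → α) (b : Fin (n + 1) → β) (P : Prop)
    (habove : ∀ i j, i < j → (R (a i) (b j) ↔ ¬P)) (hdiag : ∀ i, ¬R (a i) (b i))
    (hbelow : ∀ i j, j < i → (R (a i) (b j) ↔ P)) : HasLadder R n := by
  by_cases hP : P
  · refine hasLadder_of_iff_gt a b fun i j => ?_
    rcases lt_trichotomy i j with h | rfl | h
    · simp [habove i j h, hP, h.not_gt]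
    · simp [hdiag]
    · simp [hbelow i j h, hP, h]
  · refine hasLadder_of_iff_lt a b fun i j => ?_
    rcases lt_trichotomy i j with h | rfl | h
    · simp [habove i j h, hP, h]
    · simp [hdiag]
    · simp [hbelow i j h, hP, h.not_gt]

theorem hasLadder_of_xor_triangle_of_diag {K : ℕ} (hK : RamseyProp K n (n + 1))
    (x : Fin K → α) (u v : Fin K → β) (P : Prop) (hdiag : ∀ m, R (x m) (u m))
    (hxor : ∀ l m, l ≤ m → Xor (R (x l) (u m)) (R (x l) (v m)))
    (hbelow : ∀ l m, m < l → (R (x l) (u m) ↔ P) ∧ (R (x l) (v m) ↔ P)) : HasLadder R n := by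
  rcases hK.exists_orderEmbedding (fun l m => R (x l) (u m) ↔ ¬P) with ⟨g, hg⟩ | ⟨g, hg⟩
  · exact hasLadder_of_offDiag_of_diag (x ∘ g) (u ∘ g) P hg (fun _ => hdiag _)
      fun i j h => (hbelow _ _ (g.strictMono h)).1
  · refine hasLadder_of_offDiag_of_not_diag (x ∘ g) (v ∘ g) P (fun i j h => ?_) (fun i => ?_)
      fun i j h => (hbelow _ _ (g.strictMono h)).2
    · have huv := hxor _ _ (g.strictMono h).le
      have hu := hg i j h
      rw [xor_iff_not_iff] at huv
      simp only [Function.comp_apply]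
      tauto
    · exact fun hv => (xor_iff_not_iff _ _).1 (hxor _ _ le_rfl) (iff_of_true (hdiag _) hv)

theorem hasLadder_of_xor_triangle {K : ℕ} (hK : RamseyProp K n (n + 1))
    (x : Fin K → α) (y z : Fin K → β) (P : Prop)
    (hxor : ∀ l m, l ≤ m → Xor (R (x l) (y m)) (R (x l) (z m)))
    (hbelow : ∀ l m, m < l → (R (x l) (y m) ↔ P) ∧ (R (x l) (z m) ↔ P)) : HasLadder R n := by
  classical
  let u m := if R (x m) (y m) then y m else z m
  let v m := if R (x m) (y m) then z m else y m
  have hswap m : u m = y m ∧ v m = z m ∧ R (x m) (y m) ∨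
      u m = z m ∧ v m = y m ∧ ¬R (x m) (y m) := by
    by_cases hm : R (x m) (y m) <;> simp [u, v, hm]
  refine hasLadder_of_xor_triangle_of_diag hK x u v P (fun m => ?_) (fun l m hlm => ?_)
    fun l m hml => ?_
  · rcases hswap m with ⟨hu, -, hm⟩ | ⟨hu, -, hm⟩ <;> rw [hu]
    exacts [hm, (xor_iff_not_iff'.1 (hxor m m le_rfl)).1 hm]
  · rcases hswap m with ⟨hu, hv, -⟩ | ⟨hu, hv, -⟩ <;> rw [hu, hv]
    exacts [hxor l m hlm, (hxor l m hlm).symm]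
  · rcases hswap m with ⟨hu, hv, -⟩ | ⟨hu, hv, -⟩ <;> rw [hu, hv]
    exacts [hbelow l m hml, (hbelow l m hml).symm]

theorem not_hasLadder_xor (h : ¬HasLadder R n) :
    ¬HasLadder (fun x (p : β × β) => Xor (R x p.1) (R x p.2))
      (ramsey (ramsey n (n + 1)) (ramsey n (n + 1))) := by
  rintro ⟨a, b, hab⟩
  obtain ⟨P, g, hg⟩ :=
    (ramseyProp_ramsey _ _).exists_orderEmbedding_iff fun m l => R (a l) (b m).1
  refine h (hasLadder_of_xor_triangle (ramseyProp_ramsey n (n + 1)) (a ∘ g)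
    (fun m => (b (g m)).1) (fun m => (b (g m)).2) P (fun l m hlm => (hab _ _).2 (g.monotone hlm))
    fun l m hml => ?_)
  have hyz : ¬Xor (R (a (g l)) (b (g m)).1) (R (a (g l)) (b (g m)).2) := fun hx =>
    (g.strictMono hml).not_ge ((hab _ _).1 hx)
  rw [xor_iff_not_iff, not_not] at hyz
  exact ⟨hg m l hml, hyz.symm.trans (hg m l hml)⟩

end Ladder

theorem stmt10_general {G : Type*} [Group G] (A : Set G) (k : ℕ)
    (hst : ¬ ∃ (a b : Fin k → G), ∀ i j, (a i ∈ (fun t => t * b j) '' A ↔ i ≤ j)) :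
    ¬ ∃ (a : Fin (ramsey (ramsey k (k + 1)) (ramsey k (k + 1)) + 1) → G)
        (b : Fin (ramsey (ramsey k (k + 1)) (ramsey k (k + 1)) + 1) → G × G),
      ∀ i j, (a i ∈ symmDiff ((fun t => t * (b j).1) '' A) ((fun t => t * (b j).2) '' A)
        ↔ i ≤ j) := by
  rintro ⟨a, b, hab⟩
  exact not_hasLadder_xor (R := fun x y => x ∈ (fun t => t * y) '' A) hst
    (HasLadder.mono ⟨a, b, hab⟩ (Nat.le_succ _))

/-- If the relation x ∈ Ay is k-stable (k ≥ 2), then the relation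
φ_A(x;(y,z)) given by x ∈ Ay △ Az is n-stable for n = R(R(k,k+1),R(k,k+1)) + 1. -/
theorem stmt10 {G : Type*} [Group G] (A : Set G) (k : ℕ) (hk : 2 ≤ k)
    (hst : ¬ ∃ (a b : Fin k → G), ∀ i j, (a i ∈ (fun t => t * b j) '' A ↔ i ≤ j)) :
    ¬ ∃ (a : Fin (ramsey (ramsey k (k + 1)) (ramsey k (k + 1)) + 1) → G)
        (b : Fin (ramsey (ramsey k (k + 1)) (ramsey k (k + 1)) + 1) → G × G),
      ∀ i j, (a i ∈ symmDiff ((fun t => t * (b j).1) '' A) ((fun t => t * (b j).2) '' A)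
        ↔ i ≤ j) :=
  stmt10_general A k hst
end

section
/- If G is a group and A ⊆ G is finite with |A·A⁻¹·A| ≤ c|A|, then |(A⁻¹·A)³| ≤ c⁴·|A·A⁻¹·A|. -/
open Finset Pointwise

/-- If |AA⁻¹A| ≤ c|A| then |(A⁻¹A)³| ≤ c⁴|AA⁻¹A|. -/
theorem stmt12 {G : Type*} [Group G] [DecidableEq G] (A : Finset G) (c : ℝ)
    (h : ((A * A⁻¹ * A).card : ℝ) ≤ c * (A.card : ℝ)) :
    (((A⁻¹ * A) * (A⁻¹ * A) * (A⁻¹ * A)).card : ℝ) ≤ c ^ 4 * ((A * A⁻¹ * A).card : ℝ) := by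
  obtain rfl | hA := A.eq_empty_or_nonempty
  · simp
  -- key triangle inequality 1
  have k1 : A.card * ((A⁻¹ * A) * (A⁻¹ * A) * (A⁻¹ * A)).card ≤
      (A⁻¹ * (A * A⁻¹ * A)).card * (A⁻¹ * (A * A⁻¹ * A)).card := by
    have := Finset.ruzsa_triangle_inequality_invMul_invMul_invMul (A * A⁻¹ * A) A (A * A⁻¹ * A)
    have e : (A * A⁻¹ * A)⁻¹ * (A * A⁻¹ * A) = (A⁻¹ * A) * (A⁻¹ * A) * (A⁻¹ * A) := by
      simp [mul_inv_rev, mul_assoc]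
    rwa [e] at this
  -- key triangle inequality 2
  have k2 : (A⁻¹ * (A * A⁻¹ * A)).card * A.card ≤
      (A * A⁻¹ * A).card * (A * A⁻¹ * A).card := by
    have := Finset.ruzsa_triangle_inequality_mulInv_mulInv_mulInv (A⁻¹ * A) A (A⁻¹ * A)
    have e : (A⁻¹ * A) * (A⁻¹ * A)⁻¹ = A⁻¹ * (A * A⁻¹ * A) := by
      simp [mul_inv_rev, mul_assoc]
    have e2 : ((A⁻¹ * A) * A⁻¹).card = (A * A⁻¹ * A).card := by
      rw [← Finset.card_inv ((A⁻¹ * A) * A⁻¹)]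
      congr 1
      simp [mul_inv_rev, mul_assoc]
    rwa [e, e2] at this
  have hat : A.card ≤ (A * A⁻¹ * A).card :=
    Finset.card_le_card_mul_left (hA.mul hA.inv)
  set a : ℝ := (A.card : ℝ) with ha'
  set t : ℝ := ((A * A⁻¹ * A).card : ℝ) with ht'
  set m : ℝ := ((A⁻¹ * (A * A⁻¹ * A)).card : ℝ) with hm'
  set x : ℝ := (((A⁻¹ * A) * (A⁻¹ * A) * (A⁻¹ * A)).card : ℝ) with hx'
  have ha : 0 < a := by rw [ha']; exact_mod_cast Finset.card_pos.mpr hA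
  have hk1 : a * x ≤ m * m := by rw [ha', hx', hm']; exact_mod_cast k1
  have hk2 : m * a ≤ t * t := by rw [ha', ht', hm']; exact_mod_cast k2
  have hat' : a ≤ t := by rw [ha', ht']; exact_mod_cast hat
  have hm0 : 0 ≤ m := by rw [hm']; positivity
  have ht0 : 0 ≤ t := ha.le.trans hat'
  have e1 : a * x * (a * a) ≤ m * m * (a * a) :=
    mul_le_mul_of_nonneg_right hk1 (by positivity)
  have e3 : (m * a) * (m * a) ≤ (t * t) * (t * t) :=
    mul_le_mul hk2 hk2 (by positivity) (by positivity)
  have h3 : t ^ 4 ≤ c ^ 4 * a ^ 4 := by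
    calc t ^ 4 ≤ (c * a) ^ 4 := pow_le_pow_left₀ ht0 h 4
    _ = c ^ 4 * a ^ 4 := by ring
  have key : x ≤ c ^ 4 * a := by
    have : x * a ^ 3 ≤ (c ^ 4 * a) * a ^ 3 := by nlinarith
    exact le_of_mul_le_mul_right this (pow_pos ha 3)
  calc x ≤ c ^ 4 * a := key
  _ ≤ c ^ 4 * t := by
      have hc4 : (0:ℝ) ≤ c ^ 4 := by
        have hc : 0 < c := by nlinarith
        positivity
      exact mul_le_mul_of_nonneg_left hat' hc4
end

section
/- Let G be a group, A ⊆ G finite nonempty, and suppose H = Stab^A_η(A) := {x ∈ G : |Ax △ A| ≤ η|A|} is a subgroup with η ≤ 1. If there exist C ⊆ G finite with A ⊆ C·H, and for every g ∈ C either |gH ∩ A| < (η/|C|)|H| or |gH \ A| < (η/|C|)|H|, then there is D ⊆ C with |A △ D·H| < η|H| ≤ η|A·A⁻¹| (in particular |A △ DH| < η|H|). -/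
/-! Every `x ∈ H` moves `A` by at most `|A|`, so `|Ax ∩ A| ≥ |A|/2`; in particular `H ⊆ A⁻¹A` is
finite. Taking for `D` the `g ∈ C` whose coset `gH` meets `A` in at least `(η/|C|)|H|` points, the
regularity hypothesis bounds the part of `A △ DH` inside each coset `gH`, `g ∈ C`, by less than
`(η/|C|)|H|`. For the last inequality, double counting gives
`∑_{x ∈ H} |Ax ∩ A| = ∑_{a ∈ A} |aH ∩ A|`, and the term `x = 1` makes the left side exceed
`|H||A|/2`, so some coset `aH` contains more than half of its points in `A`. Then `T := aH ∩ A` and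
`(aha⁻¹)T` are two subsets of `aH` of total size exceeding `|aH|`, so they meet and
`aha⁻¹ ∈ TT⁻¹ ⊆ AA⁻¹` for every `h ∈ H`. -/

open Finset Pointwise

namespace Finset

variable {G : Type*} [Group G] [DecidableEq G]

theorem card_symmDiff {α : Type*} [DecidableEq α] (s t : Finset α) :
    #(symmDiff s t) = #(s \ t) + #(t \ s) :=
  card_union_of_disjoint disjoint_sdiff_sdiff

theorem card_le_two_mul_card_mul_singleton_inter {A : Finset G} {x : G}
    (h : #(symmDiff (A * {x}) A) ≤ #A) : #A ≤ 2 * #(A * {x} ∩ A) := by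
  have h₁ := card_sdiff_add_card_inter (A * {x}) A
  have h₂ := card_sdiff_add_card_inter A (A * {x})
  rw [card_mul_singleton] at h₁
  rw [inter_comm] at h₂
  rw [card_symmDiff] at h
  omega

theorem mem_inv_mul_of_nonempty_mul_singleton_inter {A : Finset G} {x : G}
    (h : (A * {x} ∩ A).Nonempty) : x ∈ A⁻¹ * A := by
  obtain ⟨y, hy⟩ := h
  obtain ⟨hyAx, hyA⟩ := mem_inter.1 hy
  obtain ⟨a, ha, z, hz, rfl⟩ := mem_mul.1 hyAx
  rw [mem_singleton.1 hz] at hyA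
  exact mem_mul.2 ⟨a⁻¹, inv_mem_inv ha, a * x, hyA, by group⟩

theorem card_mul_singleton_inter_eq (A : Finset G) (x : G) :
    #(A * {x} ∩ A) = #{a ∈ A | a * x ∈ A} := by
  rw [show A * {x} = A.image (· * x) from image₂_singleton_right, ← filter_mem_eq_inter,
    filter_image, card_image_of_injective _ (mul_left_injective x)]

theorem card_smul_finset_inter_eq (A K : Finset G) (a : G) :
    #(a • K ∩ A) = #{x ∈ K | a * x ∈ A} := by
  rw [← image_smul, ← filter_mem_eq_inter, filter_image,
    card_image_of_injective _ (MulAction.injective a)]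
  rfl

theorem sum_card_mul_singleton_inter (A K : Finset G) :
    ∑ x ∈ K, #(A * {x} ∩ A) = ∑ a ∈ A, #(a • K ∩ A) := by
  simp only [card_mul_singleton_inter_eq, card_smul_finset_inter_eq, card_filter]
  exact sum_comm

theorem mem_mul_inv_of_card_lt_two_mul {T U : Finset G} {g : G} (hT : T ⊆ U) (hgT : g • T ⊆ U)
    (hU : #U < 2 * #T) : g ∈ T * T⁻¹ := by
  obtain ⟨y, hy⟩ := inter_nonempty_of_card_lt_card_add_card hT hgT (by
    rwa [card_smul_finset, ← two_mul])
  obtain ⟨hyT, hygT⟩ := mem_inter.1 hy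
  obtain ⟨t, ht, rfl⟩ := mem_smul_finset.1 hygT
  exact mem_mul.2 ⟨g • t, hyT, t⁻¹, inv_mem_inv ht, by simp⟩

theorem card_le_card_mul_inv_of_lt_two_mul_card_smul_inter (H : Subgroup G) {K : Finset G}
    (hK : (K : Set G) = H) {A : Finset G} {a : G} (ha : #K < 2 * #(a • K ∩ A)) :
    #K ≤ #(A * A⁻¹) := by
  have hmem : ∀ k, k ∈ K ↔ k ∈ H := Set.ext_iff.1 hK
  have hconj : ∀ h ∈ K, a * h * a⁻¹ ∈ A * A⁻¹ := by
    intro h hh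
    have hshift : (a * h * a⁻¹) • (a • K ∩ A) ⊆ a • K := by
      intro y hy
      obtain ⟨z, hz, rfl⟩ := mem_smul_finset.1 hy
      obtain ⟨k, hk, rfl⟩ := mem_smul_finset.1 (mem_inter.1 hz).1
      refine mem_smul_finset.2 ⟨h * k, (hmem _).2 (mul_mem ((hmem h).1 hh) ((hmem k).1 hk)), ?_⟩
      simp only [smul_eq_mul]
      group
    exact mul_subset_mul inter_subset_right (inv_subset_inv inter_subset_right)
      (mem_mul_inv_of_card_lt_two_mul inter_subset_left hshift (by rwa [card_smul_finset]))
  calc #K = #(K.image (fun h => a * h * a⁻¹)) :=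
        (card_image_of_injective _ fun x y hxy => by simpa using hxy).symm
    _ ≤ #(A * A⁻¹) := card_le_card (image_subset_iff.2 hconj)

theorem card_le_card_mul_inv_of_forall_le_two_mul (H : Subgroup G) {K : Finset G}
    (hK : (K : Set G) = H) {A : Finset G} (hA : A.Nonempty)
    (hhalf : ∀ x ∈ K, #A ≤ 2 * #(A * {x} ∩ A)) : #K ≤ #(A * A⁻¹) := by
  have h1 : (1 : G) ∈ K := by rw [← mem_coe, hK]; exact H.one_mem
  have hsum : ∑ _a ∈ A, #K < ∑ a ∈ A, 2 * #(a • K ∩ A) :=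
    calc ∑ _a ∈ A, #K = ∑ _x ∈ K, #A := by simp only [sum_const, smul_eq_mul, mul_comm]
      _ < ∑ x ∈ K, 2 * #(A * {x} ∩ A) :=
        sum_lt_sum hhalf ⟨1, h1, by
          rw [singleton_one, mul_one, inter_self]; linarith [hA.card_pos]⟩
      _ = ∑ a ∈ A, 2 * #(a • K ∩ A) := by rw [← mul_sum, ← mul_sum, sum_card_mul_singleton_inter]
  obtain ⟨a, -, ha⟩ := exists_lt_of_sum_lt hsum
  exact card_le_card_mul_inv_of_lt_two_mul_card_smul_inter H hK ha

theorem card_symmDiff_mul_le_sum {A C D K : Finset G} (hA : A ⊆ C * K) :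
    #(symmDiff A (D * K)) ≤ ∑ g ∈ C \ D, #(g • K ∩ A) + ∑ g ∈ D, #(g • K \ A) := by
  have hmissed : A \ (D * K) ⊆ (C \ D).biUnion (fun g => g • K ∩ A) := by
    intro x hx
    obtain ⟨hxA, hxD⟩ := mem_sdiff.1 hx
    obtain ⟨g, hg, k, hk, rfl⟩ := mem_mul.1 (hA hxA)
    exact mem_biUnion.2 ⟨g, mem_sdiff.2 ⟨hg, fun hgD => hxD (mul_mem_mul hgD hk)⟩,
      mem_inter.2 ⟨smul_mem_smul_finset hk, hxA⟩⟩
  have hextra : (D * K) \ A ⊆ D.biUnion (fun g => g • K \ A) := by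
    intro x hx
    obtain ⟨hxD, hxA⟩ := mem_sdiff.1 hx
    obtain ⟨g, hg, k, hk, rfl⟩ := mem_mul.1 hxD
    exact mem_biUnion.2 ⟨g, hg, mem_sdiff.2 ⟨smul_mem_smul_finset hk, hxA⟩⟩
  rw [card_symmDiff]
  exact add_le_add ((card_le_card hmissed).trans card_biUnion_le)
    ((card_le_card hextra).trans card_biUnion_le)

theorem exists_subset_card_symmDiff_mul_lt {A C K : Finset G} (hA : A ⊆ C * K)
    (hC : C.Nonempty) {ε : ℝ}
    (hreg : ∀ g ∈ C, (#(g • K ∩ A) : ℝ) < ε ∨ (#(g • K \ A) : ℝ) < ε) :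
    ∃ D ⊆ C, (#(symmDiff A (D * K)) : ℝ) < #C * ε := by
  set p : G → Prop := fun g => ε ≤ #(g • K ∩ A)
  refine ⟨{g ∈ C | p g}, filter_subset _ _, ?_⟩
  calc (#(symmDiff A ({g ∈ C | p g} * K)) : ℝ)
      ≤ ∑ g ∈ C \ {g ∈ C | p g}, (#(g • K ∩ A) : ℝ) + ∑ g ∈ {g ∈ C | p g}, (#(g • K \ A) : ℝ) :=
        mod_cast card_symmDiff_mul_le_sum hA
    _ = ∑ g ∈ C, if p g then (#(g • K \ A) : ℝ) else #(g • K ∩ A) := by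
        rw [sum_ite, ← filter_not, add_comm]
    _ < ∑ _g ∈ C, ε := by
        refine sum_lt_sum_of_nonempty hC fun g hg => ?_
        split_ifs with hpg
        · exact (hreg g hg).resolve_left hpg.not_gt
        · exact not_le.1 hpg
    _ = #C * ε := by rw [sum_const, nsmul_eq_mul]

end Finset

/-- If H = Stab^A_η(A) is a subgroup (η ≤ 1), A ⊆ CH, and each coset gH (g ∈ C) meets
A in fewer than (η/|C|)|H| points or misses it up to fewer than (η/|C|)|H| points,
then there is D ⊆ C with |A △ DH| < η|H| ≤ η|AA⁻¹|. -/
theorem stmt18 {G : Type*} [Group G] [DecidableEq G] (A : Finset G) (hA : A.Nonempty)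
    (η : ℝ) (hη0 : 0 < η) (hη1 : η ≤ 1) (H : Subgroup G)
    (hH : (H : Set G) = {x : G | ((symmDiff (A * {x}) A).card : ℝ) ≤ η * (A.card : ℝ)})
    (C : Finset G) (hcover : (A : Set G) ⊆ (C : Set G) * (H : Set G))
    (hreg : ∀ g ∈ C,
      (((fun h => g * h) '' (H : Set G) ∩ (A : Set G)).ncard : ℝ)
          < (η / (C.card : ℝ)) * (Nat.card H : ℝ) ∨
      (((fun h => g * h) '' (H : Set G) \ (A : Set G)).ncard : ℝ)
          < (η / (C.card : ℝ)) * (Nat.card H : ℝ)) :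
    ∃ D : Finset G, D ⊆ C ∧
      ((symmDiff (A : Set G) ((D : Set G) * (H : Set G))).ncard : ℝ) < η * (Nat.card H : ℝ) ∧
      η * (Nat.card H : ℝ) ≤ η * ((A * A⁻¹).card : ℝ) := by
  have hhalf : ∀ x ∈ H, #A ≤ 2 * #(A * {x} ∩ A) := fun x hx =>
    card_le_two_mul_card_mul_singleton_inter <| by
      have : (#(symmDiff (A * {x}) A) : ℝ) ≤ η * #A := by rwa [← SetLike.mem_coe, hH] at hx
      exact_mod_cast this.trans (mul_le_of_le_one_left (Nat.cast_nonneg _) hη1)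
  have hHA : (H : Set G) ⊆ ↑(A⁻¹ * A) := fun x hx =>
    mem_inv_mul_of_nonempty_mul_singleton_inter <| card_pos.1 <| by
      have := hhalf x hx; have := hA.card_pos; omega
  obtain ⟨K, hK⟩ := ((A⁻¹ * A).finite_toSet.subset hHA).exists_finset_coe
  have hcardK : Nat.card H = #K := by
    rw [← SetLike.coe_sort_coe, ← hK, Nat.card_coe_set_eq, Set.ncard_coe_finset]
  have hcoset : ∀ g : G, (fun h => g * h) '' (H : Set G) = ↑(g • K) := fun g => by
    rw [coe_smul_finset, hK, ← Set.image_smul]; rfl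
  have hC : C.Nonempty := coe_nonempty.1 (hA.to_set.mono hcover).of_mul_left
  obtain ⟨D, hDC, hD⟩ := exists_subset_card_symmDiff_mul_lt (A := A) (K := K) (ε := η / #C * #K)
    (by rwa [← coe_subset, coe_mul, hK]) hC fun g hg => by
      simpa only [hcoset, hcardK, ← coe_inter, ← coe_sdiff, Set.ncard_coe_finset] using hreg g hg
  refine ⟨D, hDC, ?_, ?_⟩
  · rw [← hK, ← coe_mul, ← coe_symmDiff, Set.ncard_coe_finset, hcardK]
    have hC0 : (#C : ℝ) ≠ 0 := Nat.cast_ne_zero.2 hC.card_pos.ne'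
    convert hD using 1
    field_simp
  · rw [hcardK]
    refine mul_le_mul_of_nonneg_left ?_ hη0.le
    exact_mod_cast card_le_card_mul_inv_of_forall_le_two_mul H hK hA fun x hx =>
      hhalf x (by rwa [← SetLike.mem_coe, ← hK])
end
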